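/- Let d and n be positive integers, σ > 0, and let Σ₀ be a symmetric positive definite d×d real matrix. Let a₁, …, a_n ∈ ℝ^d satisfy ‖a_t‖₂ ≤ 1 for all t, and define V_t = Σ₀⁻¹ + σ⁻² Σ_{ℓ < t} a_ℓ a_ℓᵀ for t = 1, …, n+1. Then Σ_{t=1}^{n} log(1 + σ⁻² a_tᵀ V_t⁻¹ a_t) = log det(Σ₀^{1/2} V_{n+1} Σ₀^{1/2}) ≤ d log(1 + λ₁(Σ₀) n / (σ² d)), where λ₁(Σ₀) is the maximum eigenvalue of Σ₀ and Σ₀^{1/2} is the symmetric positive definite square root of Σ₀. -/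

import Mathlib

open Matrix Real

/-- Maximum eigenvalue λ₁ of a symmetric (Hermitian) real matrix. -/
noncomputable def maxEig {d : ℕ} (M : Matrix (Fin d) (Fin d) ℝ) : ℝ :=
  if h : M.IsHermitian then ⨆ i, h.eigenvalues i else 0

/-- Minimum eigenvalue λ_d of a symmetric (Hermitian) real matrix. -/
noncomputable def minEig {d : ℕ} (M : Matrix (Fin d) (Fin d) ℝ) : ℝ :=
  if h : M.IsHermitian then ⨅ i, h.eigenvalues i else 0

/-- The positive semidefinite square root of a positive semidefinite matrix
(junk value `1` otherwise). -/
noncomputable def matSqrt {d : ℕ} (M : Matrix (Fin d) (Fin d) ℝ) : Matrix (Fin d) (Fin d) ℝ :=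
  @dite _ M.PosSemidef (Classical.propDecidable _) (fun h => h.1.eigenvectorUnitary.1 *
    diagonal (RCLike.ofReal ∘ Real.sqrt ∘ h.1.eigenvalues) *
    (star h.1.eigenvectorUnitary : Matrix (Fin d) (Fin d) ℝ)) (fun _ => 1)

lemma matSqrt_eq' {d : ℕ} {M : Matrix (Fin d) (Fin d) ℝ} (h : M.PosSemidef) :
    matSqrt M = h.1.eigenvectorUnitary.1 *
    diagonal (RCLike.ofReal ∘ Real.sqrt ∘ h.1.eigenvalues) *
    (star h.1.eigenvectorUnitary : Matrix (Fin d) (Fin d) ℝ) := by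
  unfold matSqrt; rw [dif_pos h]

lemma psd_smul' {d : ℕ} {c : ℝ} (hc : 0 ≤ c) {M : Matrix (Fin d) (Fin d) ℝ}
    (hM : M.PosSemidef) : (c • M).PosSemidef := by
  refine Matrix.PosSemidef.of_dotProduct_mulVec_nonneg ?_ (fun x => ?_)
  · show (c • M)ᴴ = c • M
    rw [conjTranspose_smul, hM.1, star_trivial]
  · rw [smul_mulVec, dotProduct_smul, smul_eq_mul]
    exact mul_nonneg hc (hM.dotProduct_mulVec_nonneg x)

lemma psd_vecMulVec' {d : ℕ} (v : Fin d → ℝ) : (vecMulVec v v).PosSemidef := by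
  rw [vecMulVec_eq (Fin 1)]
  have := (Matrix.PosSemidef.one (n := Fin 1) (R := ℝ)).mul_mul_conjTranspose_same
    (replicateCol (Fin 1) v)
  simpa [vecMulVec_eq (Fin 1), star_trivial] using Matrix.posSemidef_vecMulVec_self_star v

lemma trace_eq_sum_eig' {d : ℕ} {M : Matrix (Fin d) (Fin d) ℝ} (hM : M.IsHermitian) :
    M.trace = ∑ i, hM.eigenvalues i := by
  nth_rewrite 1 [hM.spectral_theorem]
  rw [Unitary.conjStarAlgAut_apply]
  rw [Matrix.trace_mul_cycle, Matrix.mem_unitaryGroup_iff'.mp hM.eigenvectorUnitary.2,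
    Matrix.one_mul, Matrix.trace_diagonal]
  simp

lemma rayleigh' {d : ℕ} {S : Matrix (Fin d) (Fin d) ℝ} (hS : S.IsHermitian)
    (u : Fin d → ℝ) : u ⬝ᵥ (S *ᵥ u) ≤ maxEig S * (u ⬝ᵥ u) := by
  have hmax : ∀ i, hS.eigenvalues i ≤ maxEig S := by
    intro i
    rw [maxEig, dif_pos hS]
    exact le_ciSup (Set.Finite.bddAbove (Set.finite_range _)) i
  have hpsd : (maxEig S • (1 : Matrix (Fin d) (Fin d) ℝ) - S).PosSemidef := by
    nth_rewrite 2 [hS.spectral_theorem]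
    rw [Unitary.conjStarAlgAut_apply]
    have h1 : maxEig S • (1 : Matrix (Fin d) (Fin d) ℝ)
        = (hS.eigenvectorUnitary : Matrix (Fin d) (Fin d) ℝ) *
          (maxEig S • (1 : Matrix (Fin d) (Fin d) ℝ)) *
          (star (hS.eigenvectorUnitary : Matrix (Fin d) (Fin d) ℝ)) := by
      rw [Matrix.mul_smul, Matrix.mul_one, Matrix.smul_mul,
        Matrix.mem_unitaryGroup_iff.mp hS.eigenvectorUnitary.2]
    rw [h1, ← Matrix.sub_mul, ← Matrix.mul_sub]
    apply Matrix.PosSemidef.mul_mul_conjTranspose_same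
    have h2 : maxEig S • (1 : Matrix (Fin d) (Fin d) ℝ)
        - diagonal (RCLike.ofReal ∘ hS.eigenvalues)
        = diagonal (fun i => maxEig S - hS.eigenvalues i) := by
      rw [smul_eq_diagonal_mul, Matrix.mul_one, diagonal_sub]
      norm_num [Function.comp]
    rw [h2]
    exact Matrix.PosSemidef.diagonal (fun i => sub_nonneg.mpr (hmax i))
  have := hpsd.dotProduct_mulVec_nonneg u
  rw [star_trivial, sub_mulVec, dotProduct_sub, smul_mulVec, one_mulVec,
    dotProduct_smul, smul_eq_mul, sub_nonneg] at this
  exact this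

lemma posdef_conj' {d : ℕ} {R M : Matrix (Fin d) (Fin d) ℝ} (hR : R.IsHermitian)
    (hRdet : IsUnit R.det) (hM : M.PosDef) : (R * M * R).PosDef := by
  have key : (Rᴴ * M * R).PosDef := by
    refine Matrix.PosDef.of_dotProduct_mulVec_pos (isHermitian_conjTranspose_mul_mul R hM.1) (fun x hx => ?_)
    have hinj : Function.Injective (R.mulVec) :=
      Matrix.mulVec_injective_iff_isUnit.mpr ((Matrix.isUnit_iff_isUnit_det R).mpr hRdet)
    have hx' : R *ᵥ x ≠ 0 := fun h => hx (hinj (by simpa using h))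
    simpa only [star_mulVec, dotProduct_mulVec, vecMul_vecMul] using hM.dotProduct_mulVec_pos hx'
  rwa [hR.eq] at key

lemma conj_vecMulVec' {d : ℕ} {R : Matrix (Fin d) (Fin d) ℝ} (hRT : Rᵀ = R) (u : Fin d → ℝ) :
    R * vecMulVec u u * R = vecMulVec (R *ᵥ u) (R *ᵥ u) := by
  rw [vecMulVec_eq (Fin 1), vecMulVec_eq (Fin 1), replicateCol_mulVec,
    show R *ᵥ u = u ᵥ* R by rw [← vecMul_transpose, hRT], replicateRow_vecMul]
  simp only [Matrix.mul_assoc]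

lemma det_step' {d : ℕ} {W : Matrix (Fin d) (Fin d) ℝ} (hW : IsUnit W.det)
    (c : ℝ) (b : Fin d → ℝ) :
    (W + c • vecMulVec b b).det = W.det * (1 + c * (b ⬝ᵥ W⁻¹ *ᵥ b)) := by
  have h1 : c • vecMulVec b b = replicateCol (Fin 1) (c • b) * replicateRow (Fin 1) b := by
    rw [vecMulVec_eq (Fin 1)]
    ext i j
    simp [vecMulVec_apply, mul_apply, mul_assoc]
  have h2 : (1 + replicateRow (Fin 1) b * W⁻¹ * replicateCol (Fin 1) (c • b)).det
      = 1 + c * (b ⬝ᵥ W⁻¹ *ᵥ b) := by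
    rw [det_unique, Matrix.add_apply, Matrix.one_apply_eq, Matrix.mul_assoc, ← replicateCol_mulVec,
      replicateRow_mul_replicateCol_apply, mulVec_smul, dotProduct_smul, smul_eq_mul]
  rw [h1]
  rw [← h2]
  exact det_add_replicateCol_mul_replicateRow (ι := Fin 1) hW _ _

lemma conj_quad' {d : ℕ} {R V : Matrix (Fin d) (Fin d) ℝ} (hRT : Rᵀ = R) (hR : IsUnit R.det)
    (u : Fin d → ℝ) :
    (R *ᵥ u) ⬝ᵥ ((R * V * R)⁻¹ *ᵥ (R *ᵥ u)) = u ⬝ᵥ (V⁻¹ *ᵥ u) := by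
  rw [Matrix.mul_inv_rev, Matrix.mul_inv_rev, mulVec_mulVec]
  have h1 : R⁻¹ * (V⁻¹ * R⁻¹) * R = R⁻¹ * V⁻¹ := by
    rw [Matrix.mul_assoc, Matrix.mul_assoc, Matrix.nonsing_inv_mul R hR, Matrix.mul_one]
  rw [h1, ← mulVec_mulVec, dotProduct_mulVec, vecMul_mulVec, hRT,
    Matrix.mul_nonsing_inv R hR, vecMul_one]

/-- Elliptical potential / telescoping log-determinant bound (Appendix B.1):
with V_t = Σ₀⁻¹ + σ⁻² Σ_{ℓ<t} a_ℓ a_ℓᵀ (0-indexed: round t = 0, …, n−1 uses V t built from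
actions ℓ < t, and V n corresponds to V_{n+1} of the paper),
Σ_t log(1 + σ⁻² a_tᵀ V_t⁻¹ a_t) = log det(Σ₀^{1/2} V_{n+1} Σ₀^{1/2})
  ≤ d log(1 + λ₁(Σ₀) n / (σ² d)).  (Here S0 = Σ₀.) -/
theorem elliptical_potential {d n : ℕ} (hd : 0 < d) (hn : 0 < n)
    (σ : ℝ) (hσ : 0 < σ)
    (S0 : Matrix (Fin d) (Fin d) ℝ) (hS0 : S0.PosDef)
    (a : ℕ → Fin d → ℝ) (ha : ∀ t < n, ∑ i, a t i ^ 2 ≤ 1)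
    (V : ℕ → Matrix (Fin d) (Fin d) ℝ)
    (hV : ∀ t, V t = S0⁻¹ + (σ ^ 2)⁻¹ • ∑ ℓ ∈ Finset.range t, vecMulVec (a ℓ) (a ℓ)) :
    (∑ t ∈ Finset.range n, Real.log (1 + (σ ^ 2)⁻¹ * (a t ⬝ᵥ ((V t)⁻¹ *ᵥ a t))))
        = Real.log (matSqrt S0 * V n * matSqrt S0).det
      ∧ Real.log (matSqrt S0 * V n * matSqrt S0).det
        ≤ d * Real.log (1 + maxEig S0 * n / (σ ^ 2 * d)) := by
  have hPSD := hS0.posSemidef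
  set R := matSqrt S0 with hRdef
  have hRsqrt : R = hPSD.1.eigenvectorUnitary.1 *
      diagonal (RCLike.ofReal ∘ Real.sqrt ∘ hPSD.1.eigenvalues) *
      (star hPSD.1.eigenvectorUnitary : Matrix (Fin d) (Fin d) ℝ) := matSqrt_eq' hPSD
  have hRpsd : R.PosSemidef := by
    rw [hRsqrt]
    exact (Matrix.PosSemidef.diagonal (fun i => Real.sqrt_nonneg _)).mul_mul_conjTranspose_same _
  have hRH : R.IsHermitian := hRpsd.isHermitian
  have hRR : R * R = S0 := by
    rw [hRsqrt]
    conv_rhs => rw [hPSD.1.spectral_theorem, Unitary.conjStarAlgAut_apply]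
    have hU := Matrix.mem_unitaryGroup_iff'.mp hPSD.1.eigenvectorUnitary.2
    rw [show ∀ A B C D E : Matrix (Fin d) (Fin d) ℝ, A * B * C * (A * D * E)
        = A * (B * (C * A) * D) * E from fun _ _ _ _ _ => by simp only [Matrix.mul_assoc],
      hU, Matrix.mul_one, diagonal_mul_diagonal]
    congr 2
    funext i j
    have hj : 0 ≤ hPSD.1.eigenvalues j := hPSD.eigenvalues_nonneg j
    by_cases h : i = j <;> simp [diagonal_apply, h, Real.mul_self_sqrt hj]
  have hS0det : S0.det ≠ 0 := hS0.det_pos.ne'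
  have hRdet : R.det ≠ 0 := by
    intro h
    apply hS0det
    rw [← hRR, det_mul, h, mul_zero]
  have hRunit : IsUnit R.det := isUnit_iff_ne_zero.mpr hRdet
  have hRT : Rᵀ = R := by
    have := hRH.eq
    rwa [conjTranspose_eq_transpose_of_trivial] at this
  set c : ℝ := (σ ^ 2)⁻¹ with hcdef
  have hc : 0 ≤ c := by positivity
  -- positive definiteness of V t and W t
  have hsumpsd : ∀ t : ℕ, (∑ ℓ ∈ Finset.range t, vecMulVec (a ℓ) (a ℓ)).PosSemidef := by
    intro t
    induction t with
    | zero => simpa using (Matrix.PosSemidef.zero (n := Fin d) (R := ℝ))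
    | succ m ih =>
      rw [Finset.sum_range_succ]
      exact ih.add (psd_vecMulVec' (a m))
  have hVpd : ∀ t, (V t).PosDef := by
    intro t
    rw [hV]
    exact hS0.inv.add_posSemidef (psd_smul' hc (hsumpsd t))
  have hWpd : ∀ t, (R * V t * R).PosDef := fun t => posdef_conj' hRH hRunit (hVpd t)
  have hdetpos : ∀ t, 0 < (R * V t * R).det := fun t => (hWpd t).det_pos
  have hq : ∀ t, 0 ≤ a t ⬝ᵥ (V t)⁻¹ *ᵥ a t := fun t => by
    have := (hVpd t).inv.posSemidef.dotProduct_mulVec_nonneg (a t)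
    rwa [star_trivial] at this
  -- base case
  have hW0 : R * V 0 * R = 1 := by
    rw [hV 0]
    simp only [Finset.range_zero, Finset.sum_empty, smul_zero, add_zero]
    rw [← hRR, Matrix.mul_inv_rev]
    simp only [Matrix.mul_assoc]
    rw [Matrix.nonsing_inv_mul R hRunit, Matrix.mul_one, Matrix.mul_nonsing_inv R hRunit]
  -- determinant recurrence
  have hstep : ∀ t, (R * V (t + 1) * R).det
      = (R * V t * R).det * (1 + c * (a t ⬝ᵥ (V t)⁻¹ *ᵥ a t)) := by
    intro t
    have hsplit : R * V (t + 1) * R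
        = R * V t * R + c • vecMulVec (R *ᵥ a t) (R *ᵥ a t) := by
      rw [hV (t + 1), hV t, Finset.sum_range_succ, smul_add, ← add_assoc,
        ← hV t, Matrix.mul_add, Matrix.add_mul, mul_smul_comm, smul_mul_assoc,
        conj_vecMulVec' hRT]
    rw [hsplit, det_step' (hdetpos t).ne'.isUnit, conj_quad' hRT hRunit]
  -- telescoping
  have htel : ∀ m, (∑ t ∈ Finset.range m, Real.log (1 + c * (a t ⬝ᵥ (V t)⁻¹ *ᵥ a t)))
      = Real.log (R * V m * R).det := by
    intro m
    induction m with
    | zero => simp [hW0]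
    | succ m ih =>
      have hpos1 : (0:ℝ) < 1 + c * (a m ⬝ᵥ (V m)⁻¹ *ᵥ a m) := by
        have := mul_nonneg hc (hq m); linarith
      rw [Finset.sum_range_succ, ih, hstep m,
        Real.log_mul (hdetpos m).ne' hpos1.ne']
  refine ⟨htel n, ?_⟩
  -- second part
  have hH : (R * V n * R).IsHermitian := (hWpd n).isHermitian
  set μ : Fin d → ℝ := hH.eigenvalues with hμdef
  have hμpos : ∀ i, 0 < μ i := fun i => (hWpd n).eigenvalues_pos i
  have hd' : (0:ℝ) < d := by exact_mod_cast hd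
  have hdetprod : (R * V n * R).det = ∏ i, μ i := by
    have := hH.det_eq_prod_eigenvalues
    simpa using this
  have hlogdet : Real.log (R * V n * R).det = ∑ i, Real.log (μ i) := by
    rw [hdetprod, Real.log_prod (fun i _ => (hμpos i).ne')]
  -- Jensen
  have hjensen : ∑ i, ((d:ℝ)⁻¹) * Real.log (μ i)
      ≤ Real.log (∑ i, ((d:ℝ)⁻¹) * μ i) := by
    have hw1 : ∑ _i : Fin d, ((d:ℝ)⁻¹) = 1 := by
      rw [Finset.sum_const, Finset.card_univ, Fintype.card_fin, nsmul_eq_mul]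
      field_simp
    have := strictConcaveOn_log_Ioi.concaveOn.le_map_sum
      (t := Finset.univ) (w := fun _ : Fin d => (d:ℝ)⁻¹) (p := μ)
      (fun i _ => by positivity) hw1 (fun i _ => hμpos i)
    simpa [smul_eq_mul] using this
  -- trace bound
  have hmax : ∀ t < n, a t ⬝ᵥ (S0 *ᵥ a t) ≤ maxEig S0 := by
    intro t ht
    have h1 := rayleigh' hS0.isHermitian (a t)
    have hmaxpos : 0 < maxEig S0 := by
      obtain ⟨i⟩ := Fin.pos_iff_nonempty.mp hd
      have h2 : hS0.isHermitian.eigenvalues i ≤ maxEig S0 := by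
        rw [maxEig, dif_pos hS0.isHermitian]
        exact le_ciSup (Set.Finite.bddAbove (Set.finite_range _)) i
      exact lt_of_lt_of_le (hS0.eigenvalues_pos i) h2
    have h3 : a t ⬝ᵥ a t ≤ 1 := by
      have := ha t ht
      calc a t ⬝ᵥ a t = ∑ i, a t i ^ 2 := by
            simp [dotProduct, pow_two]
        _ ≤ 1 := this
    calc a t ⬝ᵥ (S0 *ᵥ a t) ≤ maxEig S0 * (a t ⬝ᵥ a t) := h1
      _ ≤ maxEig S0 * 1 := by exact mul_le_mul_of_nonneg_left h3 hmaxpos.le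
      _ = maxEig S0 := mul_one _
  have htracevec : ∀ u : Fin d → ℝ, (S0 * vecMulVec u u).trace = u ⬝ᵥ (S0 *ᵥ u) := by
    intro u
    rw [vecMulVec_eq (Fin 1), ← Matrix.mul_assoc, trace_mul_comm, ← replicateCol_mulVec,
      trace_mul_comm, trace_replicateCol_mul_replicateRow, dotProduct_comm]
  have htrace : (R * V n * R).trace ≤ d + c * n * maxEig S0 := by
    have h0 : (R * V n * R).trace = (S0 * V n).trace := by
      rw [trace_mul_cycle, hRR]
    rw [h0, hV n, Matrix.mul_add, mul_smul_comm, Finset.mul_sum, trace_add, trace_smul,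
      Matrix.mul_nonsing_inv S0 (isUnit_iff_ne_zero.mpr hS0det), trace_one, trace_sum]
    have hbound : ∑ ℓ ∈ Finset.range n, (S0 * vecMulVec (a ℓ) (a ℓ)).trace
        ≤ n * maxEig S0 := by
      calc ∑ ℓ ∈ Finset.range n, (S0 * vecMulVec (a ℓ) (a ℓ)).trace
          = ∑ ℓ ∈ Finset.range n, a ℓ ⬝ᵥ (S0 *ᵥ a ℓ) := by
            exact Finset.sum_congr rfl fun ℓ _ => htracevec (a ℓ)
        _ ≤ ∑ _ℓ ∈ Finset.range n, maxEig S0 := by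
            refine Finset.sum_le_sum fun ℓ hℓ => hmax ℓ (Finset.mem_range.mp hℓ)
        _ = n * maxEig S0 := by rw [Finset.sum_const, Finset.card_range, nsmul_eq_mul]
    have : c • ∑ ℓ ∈ Finset.range n, (S0 * vecMulVec (a ℓ) (a ℓ)).trace
        ≤ c * (n * maxEig S0) := by
      rw [smul_eq_mul]
      exact mul_le_mul_of_nonneg_left hbound hc
    have hcard : ((Fintype.card (Fin d)) : ℝ) = (d : ℝ) := by simp
    push_cast
    linarith [this]
  have htraceμ : ∑ i, μ i = (R * V n * R).trace := (trace_eq_sum_eig' hH).symm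
  -- combine
  have hsumμpos : 0 < ∑ i, μ i :=
    Finset.sum_pos (fun i _ => hμpos i) (Finset.univ_nonempty_iff.mpr (Fin.pos_iff_nonempty.mp hd))
  have hratio : (∑ i, μ i) / d ≤ 1 + maxEig S0 * n / (σ ^ 2 * d) := by
    rw [div_le_iff₀ hd']
    have hσ2 : (0:ℝ) < σ ^ 2 := by positivity
    rw [htraceμ]
    calc (R * V n * R).trace ≤ d + c * n * maxEig S0 := htrace
      _ = (1 + maxEig S0 * n / (σ ^ 2 * d)) * d := by
          rw [hcdef]; field_simp
  have hfinal : ∑ i, Real.log (μ i) ≤ d * Real.log (1 + maxEig S0 * n / (σ ^ 2 * d)) := by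
    have h2 : ∑ i, Real.log (μ i) ≤ (d:ℝ) * Real.log ((∑ i, μ i) / d) := by
      have heq : ∑ i, Real.log (μ i) = (d:ℝ) * ∑ i, ((d:ℝ)⁻¹) * Real.log (μ i) := by
        rw [← Finset.mul_sum, ← mul_assoc, mul_inv_cancel₀ hd'.ne', one_mul]
      rw [heq]
      have heq2 : Real.log (∑ i, ((d:ℝ)⁻¹) * μ i) = Real.log ((∑ i, μ i) / d) := by
        rw [← Finset.mul_sum, inv_mul_eq_div]
      calc (d:ℝ) * ∑ i, ((d:ℝ)⁻¹) * Real.log (μ i)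
          ≤ (d:ℝ) * Real.log (∑ i, ((d:ℝ)⁻¹) * μ i) :=
            mul_le_mul_of_nonneg_left hjensen hd'.le
        _ = (d:ℝ) * Real.log ((∑ i, μ i) / d) := by rw [heq2]
    have h3 : Real.log ((∑ i, μ i) / d) ≤ Real.log (1 + maxEig S0 * n / (σ ^ 2 * d)) :=
      Real.log_le_log (div_pos hsumμpos hd') hratio
    calc ∑ i, Real.log (μ i) ≤ (d:ℝ) * Real.log ((∑ i, μ i) / d) := h2
      _ ≤ (d:ℝ) * Real.log (1 + maxEig S0 * n / (σ ^ 2 * d)) :=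
          mul_le_mul_of_nonneg_left h3 hd'.le
  rw [hlogdet]
  exact hfinal
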